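/- arXiv:2501.19357 — 9 statements merged into one kernel-verified Lean document; each statement's English description precedes it below -/
import Mathlib

section
/- A subset S of V(G) is a maximal stalled set (a stalled set not properly contained in any stalled set) if and only if S is a maximal failed zero forcing set (a failed set such that adding any vertex of V(G)\S produces a zero forcing set). -/
variable {V : Type*} [Fintype V] [DecidableEq V]

/-- A fort: nonempty set such that no vertex outside has exactly one neighbor inside. -/
def Fort (G : SimpleGraph V) (W : Set V) : Prop :=
  W.Nonempty ∧ ∀ v ∉ W, ¬ ∃! w, w ∈ W ∧ G.Adj v w

/-- A minimal fort contains no fort as a proper subset. -/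
def MinimalFort (G : SimpleGraph V) (W : Set V) : Prop :=
  Fort G W ∧ ∀ W', Fort G W' → W' ⊆ W → W' = W

/-- The vertices that eventually get colored blue starting from `S`,
under the zero forcing color change rule. -/
inductive Blue (G : SimpleGraph V) (S : Set V) : V → Prop
  | init {v : V} (h : v ∈ S) : Blue G S v
  | force {u v : V} (hadj : G.Adj u v) (hu : Blue G S u)
      (h : ∀ w, G.Adj u w → w ≠ v → Blue G S w) : Blue G S v

/-- A zero forcing set colors every vertex blue. -/
def ZeroForcing (G : SimpleGraph V) (S : Set V) : Prop := ∀ v, Blue G S v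

def MinimalZeroForcing (G : SimpleGraph V) (S : Set V) : Prop :=
  ZeroForcing G S ∧ ∀ S', ZeroForcing G S' → S' ⊆ S → S' = S

/-- A stalled set: a proper subset of the vertex set from which no color change is possible. -/
def Stalled (G : SimpleGraph V) (S : Set V) : Prop :=
  S ≠ Set.univ ∧ ∀ u ∈ S, ¬ ∃! w, w ∉ S ∧ G.Adj u w

def MaximalStalled (G : SimpleGraph V) (S : Set V) : Prop :=
  Stalled G S ∧ ∀ S', Stalled G S' → S ⊆ S' → S' = S

def FailedSet (G : SimpleGraph V) (S : Set V) : Prop := ¬ ZeroForcing G S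

def MaximalFailed (G : SimpleGraph V) (S : Set V) : Prop :=
  FailedSet G S ∧ ∀ v ∉ S, ZeroForcing G (insert v S)

/-!
A set is stalled exactly when it is failed and equal to its own closure `cl(S)`, the set of
vertices it eventually colors blue. A maximal stalled set `S` is therefore failed, and if some
`insert v S` were still failed, its closure would be a stalled set strictly above `S`.
Conversely a maximal failed set is closed, since a vertex `v ∉ S` forced by `S` would make
`insert v S` and `S` color the same vertices; and a stalled set strictly above it contains some
`insert v S`, so it would be zero forcing.
-/

section Closure

variable {α : Type*} {G : SimpleGraph α}

def forcingClosure (G : SimpleGraph α) (S : Set α) : Set α := {v | Blue G S v}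

theorem subset_forcingClosure (S : Set α) : S ⊆ forcingClosure G S :=
  fun _ => Blue.init

theorem Blue.trans {S T : Set α} (hST : S ⊆ forcingClosure G T) {v : α} (hv : Blue G S v) :
    Blue G T v := by
  induction hv with
  | init h => exact hST h
  | force hadj _ _ ihu ih => exact Blue.force hadj ihu ih

theorem forcingClosure_mono {S T : Set α} (hST : S ⊆ T) :
    forcingClosure G S ⊆ forcingClosure G T :=
  fun _ => Blue.trans (hST.trans (subset_forcingClosure T))

theorem zeroForcing_iff_forcingClosure_eq_univ {S : Set α} :
    ZeroForcing G S ↔ forcingClosure G S = Set.univ :=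
  Set.eq_univ_iff_forall.symm

theorem ZeroForcing.mono {S T : Set α} (hS : ZeroForcing G S) (hST : S ⊆ T) :
    ZeroForcing G T :=
  fun v => forcingClosure_mono hST (hS v)

theorem ZeroForcing.of_insert_of_mem_forcingClosure {S : Set α} {v : α}
    (hS : ZeroForcing G (insert v S)) (hv : v ∈ forcingClosure G S) : ZeroForcing G S :=
  fun w => (hS w).trans (Set.insert_subset hv (subset_forcingClosure S))

theorem forcingClosure_subset_of_forall_not_existsUnique {S : Set α}
    (hS : ∀ u ∈ S, ¬ ∃! w, w ∉ S ∧ G.Adj u w) : forcingClosure G S ⊆ S := by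
  intro v hv
  induction hv with
  | init h => exact h
  | @force u v hadj _ _ ihu ih =>
    by_contra hvS
    exact hS u ihu ⟨v, ⟨hvS, hadj⟩, fun w hw => by_contra fun hne => hw.1 (ih w hw.2 hne)⟩

theorem not_existsUnique_of_mem_forcingClosure (S : Set α) {u : α}
    (hu : u ∈ forcingClosure G S) :
    ¬ ∃! w, w ∉ forcingClosure G S ∧ G.Adj u w := by
  rintro ⟨w, ⟨hw, hadj⟩, huniq⟩
  exact hw (Blue.force hadj hu fun x hx hne => by_contra fun hxB => hne (huniq x ⟨hxB, hx⟩))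

theorem stalled_forcingClosure {S : Set α} (h : FailedSet G S) :
    Stalled G (forcingClosure G S) :=
  ⟨mt zeroForcing_iff_forcingClosure_eq_univ.2 h,
    fun _ => not_existsUnique_of_mem_forcingClosure S⟩

theorem stalled_iff {S : Set α} :
    Stalled G S ↔ FailedSet G S ∧ forcingClosure G S ⊆ S := by
  constructor
  · rintro ⟨hne, hS⟩
    have hclosed := forcingClosure_subset_of_forall_not_existsUnique hS
    refine ⟨fun hzf => hne (Set.eq_univ_of_univ_subset ?_), hclosed⟩
    exact (zeroForcing_iff_forcingClosure_eq_univ.1 hzf).symm.subset.trans hclosed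
  · rintro ⟨hfail, hclosed⟩
    have hS : forcingClosure G S = S := hclosed.antisymm (subset_forcingClosure S)
    exact hS ▸ stalled_forcingClosure hfail

end Closure

theorem maximalStalled_iff_maximalFailed (G : SimpleGraph V) (S : Set V) :
    MaximalStalled G S ↔ MaximalFailed G S := by
  constructor
  · rintro ⟨hS, hmax⟩
    refine ⟨(stalled_iff.1 hS).1, fun v hv => by_contra fun hfail => hv ?_⟩
    have hT := hmax _ (stalled_forcingClosure hfail)
      ((Set.subset_insert v S).trans (subset_forcingClosure _))
    exact hT ▸ subset_forcingClosure _ (Set.mem_insert v S)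
  · rintro ⟨hfail, hins⟩
    have hclosed : forcingClosure G S ⊆ S := fun v hv =>
      by_contra fun hvS => hfail ((hins v hvS).of_insert_of_mem_forcingClosure hv)
    refine ⟨stalled_iff.2 ⟨hfail, hclosed⟩, fun S' hS' hSS' => ?_⟩
    refine Set.Subset.antisymm (fun v hv => by_contra fun hvS => ?_) hSS'
    exact (stalled_iff.1 hS').1 ((hins v hvS).mono (Set.insert_subset hv hSS'))
end

section
/- If v and v' are two degree-one vertices with a common neighbor (double pendants) in a graph G, and W is a minimal fort containing both v and v', then W = {v, v'}. -/
variable {V : Type*} [Fintype V] [DecidableEq V]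

theorem fort_pair_of_neighborSet_eq {V : Type*} {G : SimpleGraph V} {v v' : V} (hne : v ≠ v')
    (h : G.neighborSet v = G.neighborSet v') : Fort G {v, v'} := by
  refine ⟨Set.insert_nonempty v {v'}, ?_⟩
  rintro u - ⟨x, ⟨hx, hux⟩, huniq⟩
  have hadj : G.Adj u v ↔ G.Adj u v' := by
    simpa only [SimpleGraph.mem_neighborSet, G.adj_comm] using Set.ext_iff.1 h u
  have huv : G.Adj u v := by
    rcases hx with rfl | rfl
    exacts [hux, hadj.2 hux]
  exact hne ((huniq v ⟨Set.mem_insert v _, huv⟩).trans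
    (huniq v' ⟨Set.mem_insert_of_mem v rfl, hadj.1 huv⟩).symm)

theorem MinimalFort.eq_pair_of_neighborSet_eq {V : Type*} {G : SimpleGraph V} {W : Set V}
    (hW : MinimalFort G W) {v v' : V} (hne : v ≠ v') (h : G.neighborSet v = G.neighborSet v')
    (hvW : v ∈ W) (hv'W : v' ∈ W) : W = {v, v'} :=
  (hW.2 _ (fort_pair_of_neighborSet_eq hne h)
    (Set.insert_subset hvW (Set.singleton_subset_iff.2 hv'W))).symm

theorem minimalFort_of_double_pendants (G : SimpleGraph V) (v v' w : V) (hne : v ≠ v')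
    (hv : G.neighborSet v = {w}) (hv' : G.neighborSet v' = {w})
    (W : Set V) (hW : MinimalFort G W) (hvW : v ∈ W) (hv'W : v' ∈ W) :
    W = {v, v'} :=
  hW.eq_pair_of_neighborSet_eq hne (hv.trans hv'.symm) hvW hv'W
end

section
/- In a path P_n with vertices v_1,...,v_n in order, the set of white vertices of the standard coloring (all vertices except the v_{2j} with 2j < n) forms a fort of minimum cardinality among all forts of P_n. -/
variable {V : Type*} [Fintype V] [DecidableEq V]

/-!
Cut the vertices of `P_n` into the blocks `{v_1}, {v_2, v_3}, {v_4, v_5}, …` (indices from `0`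
below: `i` lies in block `(i + 1) / 2`). The white vertices of the standard coloring are one
vertex from each block, while a fort `W` meets every block: a vertex `v ∉ W` next to a vertex
of `W` must have its other neighbour in `W` too, so `W` contains `v_1` and, walking right, meets
every pair of consecutive vertices.
-/

open SimpleGraph

theorem Fort.exists_ne_adj {α : Type*} {G : SimpleGraph α} {W : Set α} (hW : Fort G W) {u v : α}
    (hv : v ∉ W) (hu : u ∈ W) (hvu : G.Adj v u) : ∃ w ∈ W, w ≠ u ∧ G.Adj v w := by
  by_contra! h
  exact hW.2 v hv ⟨u, ⟨hu, hvu⟩, fun w ⟨hw, hvw⟩ => by_contra fun hwu => h w hw hwu hvw⟩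

def standardWhite (n : ℕ) : Set (Fin n) := {i | ¬ (i.val % 2 = 1 ∧ i.val + 1 < n)}

def pathBlock {n : ℕ} (i : Fin n) : ℕ := (i.val + 1) / 2

section PathGraph

variable {n : ℕ} {W : Set (Fin n)}

theorem fort_standardWhite (hn : 1 ≤ n) : Fort (pathGraph n) (standardWhite n) := by
  refine ⟨⟨⟨0, hn⟩, by simp [standardWhite]⟩, fun v hv ⟨w, _, huniq⟩ => ?_⟩
  obtain ⟨hodd, hlt⟩ : v.val % 2 = 1 ∧ v.val + 1 < n := not_not.1 hv
  obtain ⟨p, hp⟩ : ∃ p : Fin n, p.val + 1 = v.val :=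
    ⟨⟨v.val - 1, by omega⟩, by simp only; omega⟩
  obtain ⟨q, hq⟩ : ∃ q : Fin n, v.val + 1 = q.val := ⟨⟨v.val + 1, hlt⟩, rfl⟩
  have hp_white : p ∈ standardWhite n := show ¬ (p.val % 2 = 1 ∧ p.val + 1 < n) by omega
  have hq_white : q ∈ standardWhite n := show ¬ (q.val % 2 = 1 ∧ q.val + 1 < n) by omega
  have hpq : p = q := (huniq p ⟨hp_white, pathGraph_adj.2 (.inr hp)⟩).trans
    (huniq q ⟨hq_white, pathGraph_adj.2 (.inl hq)⟩).symm
  omega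

theorem Fort.pathGraph_exists_mem_opposite (hW : Fort (pathGraph n) W) {u v : Fin n}
    (hv : v ∉ W) (hu : u ∈ W) (hvu : (pathGraph n).Adj v u) :
    ∃ w ∈ W, u.val + w.val = 2 * v.val := by
  obtain ⟨w, hw, hwu, hvw⟩ := hW.exists_ne_adj hv hu hvu
  refine ⟨w, hw, ?_⟩
  rw [pathGraph_adj] at hvu hvw
  have := Fin.val_ne_of_ne hwu
  omega

theorem Fort.pathGraph_exists_val_eq_zero (hW : Fort (pathGraph n) W) : ∃ w ∈ W, w.val = 0 := by
  obtain ⟨m, hm, hmin⟩ := wellFounded_lt.has_min W hW.1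
  refine ⟨m, hm, ?_⟩
  by_contra hm0
  obtain ⟨v, hvm⟩ : ∃ v : Fin n, v.val + 1 = m.val :=
    ⟨⟨m.val - 1, by omega⟩, by simp only; omega⟩
  have hv : v ∉ W := fun h => hmin v h (by rw [Fin.lt_def]; omega)
  obtain ⟨w, hw, hsum⟩ := hW.pathGraph_exists_mem_opposite hv hm (by rw [pathGraph_adj]; omega)
  exact hmin w hw (by rw [Fin.lt_def]; omega)

theorem Fort.pathGraph_exists_val_eq_or_eq_succ (hW : Fort (pathGraph n) W) {k : ℕ} (hk : k < n) :
    ∃ w ∈ W, w.val = k ∨ w.val = k + 1 := by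
  induction k with
  | zero =>
    obtain ⟨w, hw, hw0⟩ := hW.pathGraph_exists_val_eq_zero
    exact ⟨w, hw, .inl hw0⟩
  | succ k ih =>
    obtain ⟨w, hw, hwk | hwk⟩ := ih (by omega)
    · by_cases hv : (⟨k + 1, hk⟩ : Fin n) ∈ W
      · exact ⟨_, hv, .inl rfl⟩
      obtain ⟨w', hw', hsum⟩ :=
        hW.pathGraph_exists_mem_opposite hv hw (by simp only [pathGraph_adj]; omega)
      exact ⟨w', hw', .inr (by simp only at hsum; omega)⟩
    · exact ⟨w, hw, .inl hwk⟩

theorem pathBlock_le (i : Fin n) : pathBlock i ≤ n / 2 := by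
  have := i.isLt
  unfold pathBlock
  omega

theorem Fort.pathGraph_exists_pathBlock_eq (hW : Fort (pathGraph n) W) {j : ℕ}
    (hj : j ≤ n / 2) : ∃ w ∈ W, pathBlock w = j := by
  unfold pathBlock
  rcases Nat.eq_zero_or_pos j with rfl | hj0
  · obtain ⟨w, hw, hw0⟩ := hW.pathGraph_exists_val_eq_zero
    exact ⟨w, hw, by omega⟩
  · obtain ⟨w, hw, hwj⟩ := hW.pathGraph_exists_val_eq_or_eq_succ (k := 2 * j - 1) (by omega)
    exact ⟨w, hw, by omega⟩

theorem injOn_pathBlock_standardWhite : Set.InjOn pathBlock (standardWhite n) := by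
  intro a ha b hb hab
  simp only [standardWhite, pathBlock, Set.mem_ofPred_eq] at ha hb hab
  exact Fin.ext (by omega)

theorem Fort.ncard_standardWhite_le (hW : Fort (pathGraph n) W) :
    (standardWhite n).ncard ≤ W.ncard := by
  have hsub : pathBlock '' standardWhite n ⊆ pathBlock '' W := by
    rintro _ ⟨i, -, rfl⟩
    exact hW.pathGraph_exists_pathBlock_eq (pathBlock_le i)
  calc (standardWhite n).ncard = (pathBlock '' standardWhite n).ncard :=
        injOn_pathBlock_standardWhite.ncard_image.symm
    _ ≤ (pathBlock '' W).ncard := Set.ncard_le_ncard hsub (Set.toFinite _)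
    _ ≤ W.ncard := Set.ncard_image_le (Set.toFinite _)

end PathGraph

theorem standard_coloring_min_fort (n : ℕ) (hn : 1 ≤ n) :
    Fort (SimpleGraph.pathGraph n) {i : Fin n | ¬ (i.val % 2 = 1 ∧ i.val + 1 < n)} ∧
    ∀ W : Set (Fin n), Fort (SimpleGraph.pathGraph n) W →
      ({i : Fin n | ¬ (i.val % 2 = 1 ∧ i.val + 1 < n)} : Set (Fin n)).ncard ≤ W.ncard :=
  ⟨fort_standardWhite hn, fun _ hW => hW.ncard_standardWhite_le⟩
end

section
/- The path P_n is well-failed (every minimal fort is a minimum fort, equivalently every maximal failed zero forcing set is a maximum failed set) if and only if n ∈ {1, 2, 3, 4, 6}. -/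
variable {V : Type*} [Fintype V] [DecidableEq V]

/-!
A vertex of a path has at most two neighbours, so a vertex outside a fort has either none or
both of them in the fort. Hence the forts of `P_n`, numbered `0, …, n - 1`, are the vertex sets
that contain both ends and miss no two consecutive vertices, and the minimal ones are those that
moreover contain no three consecutive vertices. Every fort therefore has at least `(n + 1) / 2`
vertices and every minimal fort at most `(2n + 2) / 3`, which settles `n ∈ {1, 2, 3, 4, 6}`.
For the other `n`, deleting a suitable residue class mod 3 gives a minimal fort with more
vertices than the fort made of the even vertices and the last one.
-/

open SimpleGraph Set

theorem Fort.exists_adj_ne {α : Type*} {G : SimpleGraph α} {W : Set α} (hW : Fort G W)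
    {v u : α} (hv : v ∉ W) (hu : u ∈ W) (hvu : G.Adj v u) : ∃ w ∈ W, G.Adj v w ∧ w ≠ u := by
  by_contra! h
  exact hW.2 v hv ⟨u, ⟨hu, hvu⟩, fun w hw => h w hw.1 hw.2⟩

/-- The forts of the path `0 - 1 - ⋯ - (n - 1)`, read as sets of natural numbers. -/
structure IsPathFort (n : ℕ) (S : Set ℕ) : Prop where
  zero_mem : 0 ∈ S
  sub_one_mem : n - 1 ∈ S
  mem_or_succ_mem : ∀ i, i + 1 < n → i ∈ S ∨ i + 1 ∈ S

/-- The fort condition at a vertex `v ∉ S` of the path: since `v` has at most two neighbours,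
a neighbour `u ∈ S` forces the other one, `2 * v - u`, into `S`. -/
def PathReflectClosed (n : ℕ) (S : Set ℕ) : Prop :=
  ∀ v < n, v ∉ S → ∀ u ∈ S, u + 1 = v ∨ v + 1 = u → ∃ w ∈ S, w + u = 2 * v

def NoThreeConsecutive (S : Set ℕ) : Prop :=
  ∀ i ∈ S, i + 1 ∈ S → i + 2 ∉ S

section

variable {n : ℕ} {S T : Set ℕ}

theorem PathReflectClosed.pred_mem_and_succ_mem (h : PathReflectClosed n S) (hSn : S ⊆ Iio n)
    {j k : ℕ} (hj : j ∉ S) (hk : k ∈ S) (hjk : j ≤ k) : 0 < j ∧ j - 1 ∈ S ∧ j + 1 ∈ S := by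
  classical
  have hex : ∃ m, m ∈ S ∧ j ≤ m := ⟨k, hk, hjk⟩
  obtain ⟨hmS, hjm⟩ := Nat.find_spec hex
  have hjm' : j < Nat.find hex := lt_of_le_of_ne hjm fun h => hj (h ▸ hmS)
  have hpred : Nat.find hex - 1 ∉ S := fun h => Nat.find_min hex (by omega) ⟨h, by omega⟩
  obtain ⟨w, hwS, hw⟩ := h _ (by have := hSn hmS; simp only [mem_Iio] at this; omega) hpred _ hmS
    (Or.inr (by omega))
  have hwj : w < j := by
    by_contra! hjw
    exact Nat.find_min hex (show w < Nat.find hex by omega) ⟨hwS, hjw⟩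
  refine ⟨by omega, ?_, ?_⟩
  · rwa [show j - 1 = w by omega]
  · rwa [show j + 1 = Nat.find hex by omega]

theorem PathReflectClosed.isPathFort (h : PathReflectClosed n S) (hSn : S ⊆ Iio n)
    (hne : S.Nonempty) : IsPathFort n S := by
  have hzero : 0 ∈ S := by
    by_contra h0
    obtain ⟨k, hk⟩ := hne
    exact (h.pred_mem_and_succ_mem hSn h0 hk k.zero_le).1.false
  have hbdd : BddAbove S := ⟨n, fun x hx => (hSn hx).le⟩
  have hmax : sSup S ∈ S := Nat.sSup_mem hne hbdd
  have hlast : n - 1 ∈ S := by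
    by_contra hlast
    have hlt : sSup S + 1 < n := by
      have : sSup S ≠ n - 1 := fun h => hlast (h ▸ hmax)
      have := hSn hmax
      simp only [mem_Iio] at this
      omega
    have hnext : sSup S + 1 ∉ S := fun hs => (le_csSup hbdd hs).not_gt (Nat.lt_succ_self _)
    obtain ⟨w, hwS, hw⟩ := h _ hlt hnext _ hmax (Or.inl rfl)
    exact (le_csSup hbdd hwS).not_gt (by omega)
  refine ⟨hzero, hlast, fun i hi => ?_⟩
  by_contra! hgap
  have := (h.pred_mem_and_succ_mem hSn hgap.2 hlast (by omega)).2.1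
  exact hgap.1 (by simpa using this)

theorem IsPathFort.sdiff_singleton (hS : IsPathFort n S) {i : ℕ} (hi : i + 2 < n) (hi0 : i ∈ S)
    (hi2 : i + 2 ∈ S) : IsPathFort n (S \ {i + 1}) := by
  refine ⟨⟨hS.zero_mem, by simp⟩, ⟨hS.sub_one_mem, by simp only [mem_singleton_iff]; omega⟩,
    fun j hj => ?_⟩
  by_cases hji : j = i + 1
  · exact Or.inr ⟨hji ▸ hi2, by simp [hji]⟩
  by_cases hji' : j = i
  · exact Or.inl ⟨hji' ▸ hi0, by simp [hji']⟩
  rcases hS.mem_or_succ_mem j hj with hjS | hjS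
  · exact Or.inl ⟨hjS, hji⟩
  · exact Or.inr ⟨hjS, by simp only [mem_singleton_iff]; omega⟩

theorem IsPathFort.eq_of_subset (hT : IsPathFort n T) (hTS : T ⊆ S) (hSn : S ⊆ Iio n)
    (hS3 : NoThreeConsecutive S) : T = S := by
  refine hTS.antisymm fun v hvS => ?_
  by_contra hvT
  have hv0 : v ≠ 0 := fun h => hvT (h ▸ hT.zero_mem)
  have hvn : v ≠ n - 1 := fun h => hvT (h ▸ hT.sub_one_mem)
  have hv : v < n := hSn hvS
  by_cases hpred : v - 1 ∈ S
  · have hsucc : v + 1 ∉ S := by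
      have := hS3 (v - 1) hpred (by rwa [Nat.sub_add_cancel (by omega)])
      rwa [show v - 1 + 2 = v + 1 by omega] at this
    rcases hT.mem_or_succ_mem v (by omega) with h | h
    exacts [hvT h, hsucc (hTS h)]
  · rcases hT.mem_or_succ_mem (v - 1) (by omega) with h | h
    · exact hpred (hTS h)
    · exact hvT (by rwa [Nat.sub_add_cancel (by omega)] at h)

theorem IsPathFort.succ_le_two_mul_ncard (hS : IsPathFort n S) (hSn : S ⊆ Iio n) :
    n + 1 ≤ 2 * S.ncard := by
  have hfin : S.Finite := (finite_Iio n).subset hSn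
  have hshift : (· + 1) '' (Iio n \ S) ⊆ S \ {0} := by
    rintro _ ⟨v, ⟨hv, hvS⟩, rfl⟩
    have hvn : v + 1 < n := by
      have : v ≠ n - 1 := fun h => hvS (h ▸ hS.sub_one_mem)
      simp only [mem_Iio] at hv
      omega
    exact ⟨(hS.mem_or_succ_mem v hvn).resolve_left hvS, by simp⟩
  have hgaps := ncard_le_ncard hshift hfin.sdiff
  rw [ncard_image_of_injective _ (add_left_injective 1),
    ncard_sdiff_singleton_of_mem hS.zero_mem] at hgaps
  have htotal := ncard_sdiff_add_ncard_of_subset hSn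
  have hpos : 0 < S.ncard := (ncard_pos hfin).2 ⟨0, hS.zero_mem⟩
  rw [ncard_Iio_nat] at htotal
  omega

theorem NoThreeConsecutive.three_mul_ncard_le (hS3 : NoThreeConsecutive S) (hSn : S ⊆ Iio n) :
    3 * S.ncard ≤ 2 * n + 2 := by
  have htotal := ncard_sdiff_add_ncard_of_subset hSn
  rw [ncard_Iio_nat] at htotal
  have hG : (Iio n \ S).Finite := (finite_Iio n).sdiff
  set G := Iio n \ S
  have hcover : S ⊆ {0, n - 1} ∪ ((· + 1) '' G ∪ (· - 1) '' G) := by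
    intro v hvS
    have hv : v < n := hSn hvS
    by_cases hend : v = 0 ∨ v = n - 1
    · left
      rcases hend with rfl | rfl <;> simp
    right
    by_cases hpred : v - 1 ∈ S
    · refine Or.inr ⟨v + 1, ⟨by simp only [mem_Iio]; omega, fun hsucc => ?_⟩, by simp⟩
      exact hS3 (v - 1) hpred (by rwa [Nat.sub_add_cancel (by omega)])
        (by rwa [show v - 1 + 2 = v + 1 by omega])
    · exact Or.inl ⟨v - 1, ⟨by simp only [mem_Iio]; omega, hpred⟩, by simp; omega⟩
  have hends : ({0, n - 1} : Set ℕ).ncard ≤ 2 := (ncard_insert_le _ _).trans (by simp)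
  have := calc S.ncard
      ≤ ({0, n - 1} ∪ ((· + 1) '' G ∪ (· - 1) '' G)).ncard := ncard_le_ncard hcover
    _ ≤ ({0, n - 1} : Set ℕ).ncard + (((· + 1) '' G).ncard + ((· - 1) '' G).ncard) :=
        (ncard_union_le _ _).trans (Nat.add_le_add_left (ncard_union_le _ _) _)
    _ ≤ 2 + (G.ncard + G.ncard) :=
        Nat.add_le_add hends (Nat.add_le_add (ncard_image_le hG) (ncard_image_le hG))
  omega

theorem exists_large_minimal_pathFort (hn : 1 ≤ n) :
    ∃ S ⊆ Iio n, IsPathFort n S ∧ NoThreeConsecutive S ∧ n ≤ S.ncard + n / 3 := by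
  -- the deleted residue class `r` must spare both ends
  obtain ⟨r, hr0, hr3, hrn⟩ : ∃ r, 0 < r ∧ r < 3 ∧ (n - 1) % 3 ≠ r :=
    ⟨if (n - 1) % 3 = 1 then 2 else 1, by split_ifs <;> omega⟩
  set S := {i | i < n ∧ i % 3 ≠ r}
  have hSn : S ⊆ Iio n := fun i hi => hi.1
  have hgaps : Iio n \ S ⊆ (fun q => 3 * q + r) '' Iio (n / 3) := by
    rintro i ⟨hi, hiS⟩
    simp only [mem_Iio, S, mem_ofPred_eq, not_and, not_not] at hi hiS
    exact ⟨i / 3, by simp only [mem_Iio]; omega, by dsimp only; omega⟩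
  have hcard := (ncard_le_ncard hgaps).trans ncard_image_le
  rw [ncard_Iio_nat] at hcard
  have htotal := ncard_sdiff_add_ncard_of_subset hSn
  rw [ncard_Iio_nat] at htotal
  refine ⟨S, hSn, ⟨⟨by omega, by omega⟩, ⟨by omega, hrn⟩, fun i hi => ?_⟩,
    fun i hi hi1 hi2 => ?_, by omega⟩
  · simp only [S, mem_ofPred_eq]
    omega
  · simp only [S, mem_ofPred_eq] at hi hi1 hi2
    omega

theorem exists_small_pathFort (hn : 1 ≤ n) :
    ∃ S ⊆ Iio n, IsPathFort n S ∧ S.ncard ≤ n / 2 + 1 := by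
  set S := {i | i < n ∧ (i % 2 = 0 ∨ i = n - 1)}
  have hSn : S ⊆ Iio n := fun i hi => hi.1
  have hcover : S ⊆ insert (n - 1) ((2 * ·) '' Iio (n / 2)) := by
    rintro i ⟨hi, hi2 | hi2⟩
    · by_cases hin : i = n - 1
      · exact Or.inl hin
      · exact Or.inr ⟨i / 2, by simp only [mem_Iio]; omega, by dsimp only; omega⟩
    · exact Or.inl hi2
  have hcard := (ncard_le_ncard hcover).trans (ncard_insert_le _ _)
  rw [← ncard_Iio_nat (n / 2)]
  refine ⟨S, hSn, ⟨⟨by omega, by omega⟩, ⟨by omega, Or.inr rfl⟩, fun i hi => ?_⟩,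
    hcard.trans (Nat.add_le_add_right ncard_image_le 1)⟩
  simp only [S, mem_ofPred_eq]
  omega

end

theorem Fin.image_val_subset_Iio {n : ℕ} (W : Set (Fin n)) : Fin.val '' W ⊆ Iio n :=
  (image_subset_range _ _).trans Fin.range_val.subset

theorem fort_pathGraph_iff {n : ℕ} {W : Set (Fin n)} :
    Fort (pathGraph n) W ↔ IsPathFort n (Fin.val '' W) := by
  constructor
  · intro hW
    refine PathReflectClosed.isPathFort ?_ (Fin.image_val_subset_Iio W) (hW.1.image _)
    rintro v hv hvW _ ⟨u, hu, rfl⟩ hadj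
    obtain ⟨w, hw, hvw, hwu⟩ := hW.exists_adj_ne (v := ⟨v, hv⟩) (fun h => hvW ⟨_, h, rfl⟩) hu
      (pathGraph_adj.2 hadj.symm)
    have hne := Fin.val_injective.ne hwu
    rw [pathGraph_adj] at hvw
    exact ⟨w, ⟨w, hw, rfl⟩, by simp only at hvw; omega⟩
  · intro hS
    refine ⟨hS.zero_mem.imp fun _ h => h.1, fun v hv ⟨u, ⟨huW, hvu⟩, huniq⟩ => ?_⟩
    have hvS : (v : ℕ) ∉ Fin.val '' W := Fin.val_injective.mem_set_image.not.2 hv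
    have hv0 : (v : ℕ) ≠ 0 := fun h => hvS (h ▸ hS.zero_mem)
    have hvn : (v : ℕ) ≠ n - 1 := fun h => hvS (h ▸ hS.sub_one_mem)
    have hlt := v.isLt
    obtain ⟨a, ha, hav⟩ : (v : ℕ) - 1 ∈ Fin.val '' W := by
      have := hS.mem_or_succ_mem (v - 1) (by omega)
      rwa [Nat.sub_add_cancel (by omega), or_iff_left hvS] at this
    obtain ⟨b, hb, hbv⟩ := (hS.mem_or_succ_mem v (by omega)).resolve_left hvS
    have hau := huniq a ⟨ha, pathGraph_adj.2 (by omega)⟩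
    have hbu := huniq b ⟨hb, pathGraph_adj.2 (by omega)⟩
    have := congrArg Fin.val (hau.trans hbu.symm)
    omega

theorem minimalFort_pathGraph_iff {n : ℕ} {W : Set (Fin n)} :
    MinimalFort (pathGraph n) W ↔
      IsPathFort n (Fin.val '' W) ∧ NoThreeConsecutive (Fin.val '' W) := by
  have hWn := Fin.image_val_subset_Iio W
  simp only [MinimalFort, fort_pathGraph_iff]
  constructor
  · rintro ⟨hW, hmin⟩
    refine ⟨hW, fun i hi ⟨v, hv, hvi⟩ hi2 => ?_⟩
    have hsmaller : IsPathFort n (Fin.val '' (W \ {v})) := by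
      rw [image_sdiff Fin.val_injective, image_singleton, hvi]
      exact hW.sdiff_singleton (hWn hi2) hi hi2
    have := hmin _ hsmaller sdiff_subset
    exact (this.symm ▸ hv : v ∈ W \ {v}).2 rfl
  · rintro ⟨hW, hW3⟩
    refine ⟨hW, fun W' hW' hsub => Fin.val_injective.image_injective ?_⟩
    exact hW'.eq_of_subset (image_mono hsub) hWn hW3

theorem path_wellFailed_iff (n : ℕ) (hn : 1 ≤ n) :
    (∀ W : Set (Fin n), MinimalFort (SimpleGraph.pathGraph n) W →
      ∀ W' : Set (Fin n), Fort (SimpleGraph.pathGraph n) W' → W.ncard ≤ W'.ncard) ↔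
    n ∈ ({1, 2, 3, 4, 6} : Set ℕ) := by
  have hcard (W : Set (Fin n)) : W.ncard = (Fin.val '' W).ncard :=
    (ncard_image_of_injective W Fin.val_injective).symm
  simp only [minimalFort_pathGraph_iff, fort_pathGraph_iff, mem_insert_iff, mem_singleton_iff]
  constructor
  · intro h
    obtain ⟨S, hSn, hS, hS3, hSlarge⟩ := exists_large_minimal_pathFort hn
    obtain ⟨T, hTn, hT, hTsmall⟩ := exists_small_pathFort hn
    have hval {U : Set ℕ} (hU : U ⊆ Iio n) : Fin.val '' (Fin.val ⁻¹' U) = U :=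
      image_preimage_eq_of_subset (Fin.range_val ▸ hU)
    have := h _ (by rw [hval hSn]; exact ⟨hS, hS3⟩) _ (by rwa [hval hTn])
    rw [hcard, hcard, hval hSn, hval hTn] at this
    omega
  · intro hn' W hW W' hW'
    have := hW.2.three_mul_ncard_le (Fin.image_val_subset_Iio W)
    have := hW'.succ_le_two_mul_ncard (Fin.image_val_subset_Iio W')
    rw [hcard, hcard]
    omega
end

section
/- If S is a minimal zero forcing set of G and W is a fort of G, then S ∩ W is nonempty. -/
variable {V : Type*} [Fintype V] [DecidableEq V]

/-! If `S` misses the fort `W`, the complement of `W` is closed under forcing: a blue vertex `u`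
outside `W` with a neighbour in `W` has at least two of them, all white, so `u` cannot force into
`W`. -/

omit [Fintype V] in
theorem Blue.notMem_of_disjoint {G : SimpleGraph V} {S W : Set V}
    (hW : ∀ v ∉ W, ¬ ∃! w, w ∈ W ∧ G.Adj v w) (hSW : Disjoint S W) {v : V}
    (hv : Blue G S v) : v ∉ W := by
  induction hv with
  | init hvS => exact Set.disjoint_left.mp hSW hvS
  | @force u v hadj _ _ hu_notMem hothers_notMem =>
    intro hvW
    refine hW u hu_notMem ⟨v, ⟨hvW, hadj⟩, fun w ⟨hwW, huw⟩ => ?_⟩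
    by_contra hwv
    exact hothers_notMem w huw hwv hwW

omit [Fintype V] in
theorem ZeroForcing.inter_nonempty_of_fort {G : SimpleGraph V} {S W : Set V}
    (hS : ZeroForcing G S) (hW : Fort G W) : (S ∩ W).Nonempty := by
  rw [← Set.not_disjoint_iff_nonempty_inter]
  intro hSW
  obtain ⟨w, hwW⟩ := hW.1
  exact (hS w).notMem_of_disjoint hW.2 hSW hwW

theorem minimalZeroForcing_inter_fort_nonempty (G : SimpleGraph V) (S W : Set V)
    (hS : MinimalZeroForcing G S) (hW : Fort G W) :
    (S ∩ W).Nonempty :=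
  hS.1.inter_nonempty_of_fort hW
end

section
/- A set S ⊆ V(G) is a minimal zero forcing set of G if and only if S is a minimal cover of the collection of minimal forts of G (i.e., S intersects every minimal fort, and no proper subset of S does). -/
variable {V : Type*} [Fintype V] [DecidableEq V]

/-- A cover of the minimal forts of `G`: a set meeting every minimal fort. -/
def CoverOfMinimalForts (G : SimpleGraph V) (C : Set V) : Prop :=
  ∀ W, MinimalFort G W → (C ∩ W).Nonempty

/-! A vertex set is zero forcing exactly when it meets every fort: a fort disjoint from `S` can
never receive its first blue vertex, since the forcing vertex outside it would have exactly one
neighbour in it; conversely, if `S` is not zero forcing, the vertices that never turn blue form a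
fort. On a finite vertex set every fort contains a minimal one, so meeting every fort is the same
as meeting every minimal fort, and the two minimality conditions coincide. -/

omit [Fintype V] [DecidableEq V] in
theorem Blue.notMem_of_fort {G : SimpleGraph V} {S W : Set V} (hW : Fort G W) (hSW : Disjoint S W)
    {v : V} (hv : Blue G S v) : v ∉ W := by
  induction hv with
  | init hvS => exact hSW.notMem_of_mem_left hvS
  | @force u v hadj _ _ hu_notMem hw_notMem =>
    intro hvW
    refine hW.2 u hu_notMem ⟨v, ⟨hvW, hadj⟩, ?_⟩
    rintro w ⟨hwW, huw⟩
    by_contra hwv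
    exact hw_notMem w huw hwv hwW

omit [Fintype V] [DecidableEq V] in
theorem fort_setOf_not_blue {G : SimpleGraph V} {S : Set V} (hS : ¬ ZeroForcing G S) :
    Fort G {v | ¬ Blue G S v} := by
  obtain ⟨v, hv⟩ := not_forall.mp hS
  refine ⟨⟨v, hv⟩, fun u hu => ?_⟩
  rintro ⟨w, ⟨hw, huw⟩, hw_unique⟩
  refine hw (Blue.force huw (not_not.mp hu) fun x hux hxw => ?_)
  by_contra hx
  exact hxw (hw_unique x ⟨hx, hux⟩)

omit [Fintype V] [DecidableEq V] in
theorem zeroForcing_iff_forall_fort_inter_nonempty {G : SimpleGraph V} {S : Set V} :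
    ZeroForcing G S ↔ ∀ W, Fort G W → (S ∩ W).Nonempty := by
  refine ⟨fun hS W hW => ?_, fun hS => ?_⟩
  · obtain ⟨w, hw⟩ := hW.1
    by_contra hSW
    exact Blue.notMem_of_fort hW (Set.disjoint_iff_inter_eq_empty.mpr
      (Set.not_nonempty_iff_eq_empty.mp hSW)) (hS w) hw
  · by_contra hS'
    obtain ⟨s, hs, hs_notBlue⟩ := hS _ (fort_setOf_not_blue hS')
    exact hs_notBlue (Blue.init hs)

omit [DecidableEq V] in
theorem Fort.exists_minimalFort_subset {G : SimpleGraph V} {W : Set V} (hW : Fort G W) :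
    ∃ W' ⊆ W, MinimalFort G W' := by
  obtain ⟨W', hW'W, hW'_fort, hW'_min⟩ := exists_minimal_le_of_wellFoundedLT (Fort G) W hW
  exact ⟨W', hW'W, hW'_fort, fun U hU hUW' => (hW'_min hU hUW').antisymm' hUW'⟩

omit [DecidableEq V] in
theorem zeroForcing_iff_coverOfMinimalForts {G : SimpleGraph V} {S : Set V} :
    ZeroForcing G S ↔ CoverOfMinimalForts G S := by
  rw [zeroForcing_iff_forall_fort_inter_nonempty]
  refine ⟨fun hS W hW => hS W hW.1, fun hS W hW => ?_⟩
  obtain ⟨W', hW'W, hW'⟩ := hW.exists_minimalFort_subset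
  exact (hS W' hW').mono (Set.inter_subset_inter_right S hW'W)

theorem minimalZeroForcing_iff_minimalCover (G : SimpleGraph V) (S : Set V) :
    MinimalZeroForcing G S ↔
      (CoverOfMinimalForts G S ∧
        ∀ C, CoverOfMinimalForts G C → C ⊆ S → C = S) := by
  simp only [MinimalZeroForcing, zeroForcing_iff_coverOfMinimalForts]
end

section
/- The spider tree star_{2,2,2}, obtained by subdividing each edge of the star K_{1,3} once, is well-failed: every minimal fort has exactly four vertices. -/
variable {V : Type*} [Fintype V] [DecidableEq V]

/-- The spider tree `star_{2,2,2}`: the subdivision of `K_{1,3}`, with center `0`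
and legs `0-1-2`, `0-3-4`, `0-5-6`. -/
def star222 : SimpleGraph (Fin 7) :=
  SimpleGraph.fromRel (fun i j => (i.val, j.val) ∈ [(0,1), (1,2), (0,3), (3,4), (0,5), (5,6)])

/-! In a fort, the leaf `b` of a pendant path `c - a - b` lies in the fort as soon as `a` or `c`
does, and if `c` lies outside then `a` and `b` are in or out together. So a fort of `star_{2,2,2}`
either contains the centre, hence all three leaves, or avoids it and is a union of legs; the fort
condition at the centre then forces at least two legs. Either way it contains one of the
4-vertex forts {centre, leaves} or {two legs}, which a minimal fort must equal. -/

section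

variable {α : Type*} {G : SimpleGraph α} {W : Set α} {u v : α}

theorem Fort.exists_ne_mem_of_adj (hW : Fort G W) (hv : v ∉ W) (hvu : G.Adj v u) (hu : u ∈ W) :
    ∃ w ∈ G.neighborSet v, w ≠ u ∧ w ∈ W := by
  by_contra! h
  exact hW.2 v hv ⟨u, ⟨hu, hvu⟩, fun w ⟨hw, hvw⟩ => by_contra fun hwu => h w hvw hwu hw⟩

def IsPendantPath (G : SimpleGraph α) (root mid leaf : α) : Prop :=
  G.neighborSet mid = {root, leaf} ∧ G.neighborSet leaf = {mid}

namespace IsPendantPath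

variable {r m l : α}

theorem leaf_mem_of_mid_mem (hP : IsPendantPath G r m l) (hW : Fort G W) (hm : m ∈ W) :
    l ∈ W := by
  by_contra hl
  obtain ⟨w, hw, hwm, -⟩ :=
    hW.exists_ne_mem_of_adj hl (by rw [← G.mem_neighborSet, hP.2]; rfl) hm
  rw [hP.2] at hw
  exact hwm hw

theorem leaf_mem_of_root_mem (hP : IsPendantPath G r m l) (hW : Fort G W) (hr : r ∈ W) :
    l ∈ W := by
  by_contra hl
  have hm : m ∉ W := fun hm => hl (hP.leaf_mem_of_mid_mem hW hm)
  obtain ⟨w, hw, hwr, hwW⟩ :=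
    hW.exists_ne_mem_of_adj hm (by rw [← G.mem_neighborSet, hP.1]; simp) hr
  rw [hP.1] at hw
  rcases hw with rfl | rfl
  exacts [hwr rfl, hl hwW]

theorem mid_mem_of_leaf_mem (hP : IsPendantPath G r m l) (hW : Fort G W) (hr : r ∉ W)
    (hl : l ∈ W) : m ∈ W := by
  by_contra hm
  obtain ⟨w, hw, hwl, hwW⟩ :=
    hW.exists_ne_mem_of_adj hm (by rw [← G.mem_neighborSet, hP.1]; simp) hl
  rw [hP.1] at hw
  rcases hw with rfl | rfl
  exacts [hr hwW, hwl rfl]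

end IsPendantPath

end

instance : DecidableRel star222.Adj := fun i j =>
  inferInstanceAs (Decidable (i ≠ j ∧ _))

theorem star222_neighborSet_zero : star222.neighborSet 0 = {1, 3, 5} := by
  ext w; fin_cases w <;> simp [star222]

theorem star222_isPendantPath :
    IsPendantPath star222 0 1 2 ∧ IsPendantPath star222 0 3 4 ∧ IsPendantPath star222 0 5 6 := by
  refine ⟨⟨?_, ?_⟩, ⟨?_, ?_⟩, ⟨?_, ?_⟩⟩ <;> ext w <;> fin_cases w <;> simp [star222]

theorem Fort.star222_contains_center_leaves_or_two_legs {W : Set (Fin 7)} (hW : Fort star222 W) :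
    {0, 2, 4, 6} ⊆ W ∨ {1, 2, 3, 4} ⊆ W ∨ {1, 2, 5, 6} ⊆ W ∨ {3, 4, 5, 6} ⊆ W := by
  obtain ⟨h₁, h₃, h₅⟩ := star222_isPendantPath
  simp only [Set.insert_subset_iff, Set.singleton_subset_iff]
  by_cases h₀ : 0 ∈ W
  · exact Or.inl ⟨h₀, h₁.leaf_mem_of_root_mem hW h₀, h₃.leaf_mem_of_root_mem hW h₀,
      h₅.leaf_mem_of_root_mem hW h₀⟩
  have leg₁ : 1 ∈ W ↔ 2 ∈ W :=
    ⟨h₁.leaf_mem_of_mid_mem hW, h₁.mid_mem_of_leaf_mem hW h₀⟩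
  have leg₃ : 3 ∈ W ↔ 4 ∈ W :=
    ⟨h₃.leaf_mem_of_mid_mem hW, h₃.mid_mem_of_leaf_mem hW h₀⟩
  have leg₅ : 5 ∈ W ↔ 6 ∈ W :=
    ⟨h₅.leaf_mem_of_mid_mem hW, h₅.mid_mem_of_leaf_mem hW h₀⟩
  have center : ∀ u ∈ star222.neighborSet 0, u ∈ W → ∃ w ∈ star222.neighborSet 0, w ≠ u ∧ w ∈ W :=
    fun _ => hW.exists_ne_mem_of_adj h₀
  rw [star222_neighborSet_zero] at center
  have hmid : 1 ∈ W ∨ 3 ∈ W ∨ 5 ∈ W := by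
    obtain ⟨x, hx⟩ := hW.1
    fin_cases x <;> tauto
  rw [← leg₁, ← leg₃, ← leg₅]
  grind

theorem Fort.star222_exists_fort_subset_ncard_eq_four {W : Set (Fin 7)} (hW : Fort star222 W) :
    ∃ F ⊆ W, Fort star222 F ∧ F.ncard = 4 := by
  rcases hW.star222_contains_center_leaves_or_two_legs with h | h | h | h <;>
    exact ⟨_, h, ⟨⟨_, Set.mem_insert _ _⟩, by simp only [ExistsUnique]; decide⟩,
      by rw [Set.ncard_eq_toFinset_card']; rfl⟩

theorem star222_wellFailed :
    ∀ W : Set (Fin 7), MinimalFort star222 W → W.ncard = 4 := by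
  rintro W ⟨hW, hmin⟩
  obtain ⟨F, hFW, hF, hF4⟩ := hW.star222_exists_fort_subset_ncard_eq_four
  rwa [← hmin F hF hFW]
end

section
/- Every tree with at least two vertices of degree ≥ 3 contains at least two pendent generalized stars. -/
variable {V : Type*} [Fintype V] [DecidableEq V]

/-- A pendent path from `v`: vertices `x 0, ..., x (m-1)` forming a path starting at a
neighbor of `v`, ending at a leaf, all of whose other vertices have degree 2. -/
def PendentPath (T : SimpleGraph V) (v : V) (m : ℕ) (x : Fin m → V) : Prop :=
  Function.Injective x ∧ (∀ i, x i ≠ v) ∧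
  (∀ h : 0 < m, T.Adj v (x ⟨0, h⟩)) ∧
  (∀ (i : ℕ) (h : i + 1 < m), T.Adj (x ⟨i, Nat.lt_of_succ_lt h⟩) (x ⟨i + 1, h⟩)) ∧
  (∀ h : 0 < m, (T.neighborSet (x ⟨m - 1, Nat.sub_lt h one_pos⟩)).ncard = 1) ∧
  (∀ (i : ℕ) (h : i + 1 < m), (T.neighborSet (x ⟨i, Nat.lt_of_succ_lt h⟩)).ncard = 2)

/-- `v` is the center of a pendent generalized star: it has degree at least 3 and
exactly one of its neighbors does not start a pendent path of `v` (so that deleting `v`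
leaves `k + 1` components, exactly `k ≥ 2` of which are pendent paths of `v`). -/
def PGSCenter (T : SimpleGraph V) (v : V) : Prop :=
  3 ≤ (T.neighborSet v).ncard ∧
  ∃! u, T.Adj v u ∧
    ¬ ∃ (m : ℕ) (x : Fin m → V), PendentPath T v m x ∧ ∃ h : 0 < m, x ⟨0, h⟩ = u

/-!
Choose two vertices `a`, `b` of degree at least 3 at maximum distance. Every vertex of degree at
least 3 in a branch at `a` not containing `b` would be farther from `b` than `a` is, so all those
branches have maximum degree 2 and are therefore pendent paths of `a`; the branch towards `b` is
not, since it contains `b`. Hence `a`, and symmetrically `b`, is the center of a pendent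
generalized star.
-/

namespace SimpleGraph

variable {α : Type*} {G : SimpleGraph α} {v u u₁ u₂ w z : α}

/-- The vertex set of the component of `G - v` containing `u` (empty if `u = v`). -/
def branch (G : SimpleGraph α) (v u : α) : Set α :=
  {w | ∃ p : G.Walk u w, v ∉ p.support}

lemma ne_of_mem_branch (hw : w ∈ G.branch v u) : w ≠ v := by
  obtain ⟨p, hp⟩ := hw
  exact fun h => hp (h ▸ p.end_mem_support)

lemma self_mem_branch (h : u ≠ v) : u ∈ G.branch v u :=
  ⟨.nil, by simpa using h.symm⟩

lemma mem_branch_comm : w ∈ G.branch v u ↔ u ∈ G.branch v w :=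
  ⟨fun ⟨p, hp⟩ => ⟨p.reverse, by simpa using hp⟩, fun ⟨p, hp⟩ => ⟨p.reverse, by simpa using hp⟩⟩

lemma mem_branch_trans (hw : w ∈ G.branch v u) (hz : z ∈ G.branch v w) : z ∈ G.branch v u := by
  obtain ⟨p, hp⟩ := hw
  obtain ⟨q, hq⟩ := hz
  exact ⟨p.append q, by simp [Walk.mem_support_append_iff, hp, hq]⟩

lemma mem_branch_of_adj (hw : w ∈ G.branch v u) (hwz : G.Adj w z) (hz : z ≠ v) :
    z ∈ G.branch v u :=
  mem_branch_trans hw ⟨.cons hwz .nil, by simp [(ne_of_mem_branch hw).symm, hz.symm]⟩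

lemma IsAcyclic.disjoint_branch (hG : G.IsAcyclic) (h₁ : G.Adj v u₁) (h₂ : G.Adj v u₂)
    (hne : u₁ ≠ u₂) : Disjoint (G.branch v u₁) (G.branch v u₂) := by
  classical
  refine Set.disjoint_left.mpr fun w hw₁ hw₂ => ?_
  obtain ⟨p, hp⟩ := mem_branch_trans hw₁ (mem_branch_comm.mp hw₂)
  have hpath : (Walk.cons h₁.symm (.cons h₂ .nil) : G.Walk u₁ u₂).IsPath := by
    simp [Walk.cons_isPath_iff, h₁.ne', h₂.ne, hne]
  have heq : p.bypass = .cons h₁.symm (.cons h₂ .nil) :=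
    congrArg Subtype.val ((hG.subsingleton_path u₁ u₂).elim ⟨_, p.bypass_isPath⟩ ⟨_, hpath⟩)
  exact hp (p.support_bypass_subset_support (by simp [heq]))

lemma IsAcyclic.branch_subset_branch (hG : G.IsAcyclic) (hvu : G.Adj v u) (huw : G.Adj u w)
    (hw : w ≠ v) : G.branch u w ⊆ G.branch v u := by
  classical
  rintro z ⟨p, hp⟩
  have hv : v ∉ p.support := fun hv =>
    have hvw : v ∈ G.branch u w :=
      ⟨p.takeUntil v hv, fun h => hp (p.support_takeUntil_subset_support hv h)⟩
    (hG.disjoint_branch huw hvu.symm hw).ne_of_mem hvw (self_mem_branch hvu.ne) rfl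
  exact ⟨.cons huw p, by simp [hvu.ne, hv]⟩

lemma Preconnected.exists_adj_mem_branch (hG : G.Preconnected) (hw : w ≠ v) :
    ∃ u, G.Adj v u ∧ w ∈ G.branch v u := by
  obtain ⟨p, hp⟩ := (hG v w).exists_isPath
  cases p with
  | nil => exact absurd rfl hw
  | cons hadj q => exact ⟨_, hadj, q, (Walk.cons_isPath_iff _ _).mp hp |>.2⟩

lemma Connected.dist_lt_of_notMem_branch (hG : G.Connected) (hw : w ≠ v)
    (hu : u ∉ G.branch v w) : G.dist v u < G.dist w u := by
  classical
  obtain ⟨p, hp⟩ := hG.exists_walk_length_eq_dist w u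
  have hv : v ∈ p.support := by
    by_contra h
    exact hu ⟨p, h⟩
  have hsplit : (p.takeUntil v hv).length + (p.dropUntil v hv).length = p.length := by
    rw [← Walk.length_append, Walk.take_spec]
  have htake := dist_le (p.takeUntil v hv)
  have hdrop := dist_le (p.dropUntil v hv)
  have hpos := hG.pos_dist_of_ne hw
  omega

end SimpleGraph

section PendentPath

open SimpleGraph

variable {α : Type*} {G : SimpleGraph α} {v u w z : α} {m : ℕ} {x : Fin m → α}

lemma PendentPath.mem_branch (hx : PendentPath G v m x) (hm : 0 < m) (i : Fin m) :
    x i ∈ G.branch v (x ⟨0, hm⟩) := by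
  obtain ⟨-, hne, -, hchain, -, -⟩ := hx
  obtain ⟨k, hk⟩ := i
  induction k with
  | zero => exact self_mem_branch (hne _)
  | succ k ih => exact mem_branch_of_adj (ih (by omega)) (hchain k hk) (hne _)

lemma PendentPath.ncard_neighborSet_le (hx : PendentPath G v m x) (i : Fin m) :
    (G.neighborSet (x i)).ncard ≤ 2 := by
  obtain ⟨-, -, -, -, hlast, hinner⟩ := hx
  obtain ⟨k, hk⟩ := i
  by_cases h : k + 1 < m
  · exact (hinner k h).le
  · obtain rfl : k = m - 1 := by omega
    exact (hlast (by omega)).trans_le (by omega)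

lemma PendentPath.eq_or_mem_range_of_adj (hx : PendentPath G v m x) (i : Fin m)
    (hz : G.Adj (x i) z) : z = v ∨ z ∈ Set.range x := by
  obtain ⟨hinj, hne, hstart, hchain, hlast, hinner⟩ := hx
  obtain ⟨k, hk⟩ := i
  -- `p` is the vertex before `x k` on the walk `v, x 0, x 1, …`
  obtain ⟨p, hp, hpv⟩ :
      ∃ p, G.Adj (x ⟨k, hk⟩) p ∧ (p = v ∨ ∃ j : Fin m, j.val + 1 = k ∧ x j = p) := by
    cases k with
    | zero => exact ⟨v, (hstart hk).symm, .inl rfl⟩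
    | succ j => exact ⟨x ⟨j, by omega⟩, (hchain j hk).symm, .inr ⟨_, rfl, rfl⟩⟩
  have hp' : p = v ∨ p ∈ Set.range x := hpv.imp_right fun ⟨j, _, hj⟩ => ⟨j, hj⟩
  by_cases hk' : k + 1 < m
  · have hpq : p ≠ x ⟨k + 1, hk'⟩ := by
      rcases hpv with rfl | ⟨j, hj, rfl⟩
      · exact (hne _).symm
      · intro h
        have := congrArg Fin.val (hinj h)
        simp only at this
        omega
    have hN : {p, x ⟨k + 1, hk'⟩} = G.neighborSet (x ⟨k, hk⟩) :=
      Set.eq_of_subset_of_ncard_le (Set.insert_subset hp (Set.singleton_subset_iff.mpr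
        (hchain k hk'))) (by rw [hinner k hk', Set.ncard_pair hpq])
        (Set.finite_of_ncard_pos (by rw [hinner k hk']; omega))
    have hz' : z ∈ ({p, x ⟨k + 1, hk'⟩} : Set α) := by rw [hN]; exact hz
    rcases hz' with rfl | rfl
    · exact hp'
    · exact .inr ⟨_, rfl⟩
  · obtain rfl : k = m - 1 := by omega
    have hN : {p} = G.neighborSet (x ⟨m - 1, hk⟩) :=
      Set.eq_of_subset_of_ncard_le (Set.singleton_subset_iff.mpr hp)
        (by rw [hlast (by omega), Set.ncard_singleton])
        (Set.finite_of_ncard_pos (by rw [hlast (by omega)]; omega))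
    have hz' : z ∈ ({p} : Set α) := by rw [hN]; exact hz
    obtain rfl := hz'
    exact hp'

lemma PendentPath.mem_range_of_mem_branch (hx : PendentPath G v m x) (i : Fin m)
    (hw : w ∈ G.branch v (x i)) : w ∈ Set.range x := by
  suffices ∀ {a w : α} (p : G.Walk a w), v ∉ p.support → a ∈ Set.range x → w ∈ Set.range x by
    obtain ⟨p, hp⟩ := hw
    exact this p hp ⟨i, rfl⟩
  intro a w p
  induction p with
  | nil => exact fun _ ha => ha
  | cons hadj q ih =>
    rintro hp ⟨i, rfl⟩
    rw [Walk.support_cons, List.mem_cons, not_or] at hp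
    rcases hx.eq_or_mem_range_of_adj i hadj with rfl | hc
    · exact absurd q.start_mem_support hp.2
    · exact ih hp.2 hc

lemma PendentPath.single (hvu : G.Adj v u) (hu : (G.neighborSet u).ncard = 1) :
    PendentPath G v 1 (fun _ => u) :=
  ⟨Function.injective_of_subsingleton _, fun _ => hvu.ne', fun _ => hvu,
    fun _ h => absurd h (by omega), fun _ => hu, fun _ h => absurd h (by omega)⟩

lemma PendentPath.cons (hx : PendentPath G u m x) (hm : 0 < m) (hvu : G.Adj v u)
    (hu : (G.neighborSet u).ncard = 2) (hxv : ∀ i, x i ≠ v) :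
    PendentPath G v (m + 1) (Fin.cons u x : Fin (m + 1) → α) := by
  obtain ⟨hinj, hne, hstart, hchain, hlast, hinner⟩ := hx
  obtain ⟨n, rfl⟩ : ∃ n, m = n + 1 := ⟨m - 1, by omega⟩
  refine ⟨Fin.cons_injective_iff.mpr ⟨fun ⟨i, hi⟩ => hne i hi, hinj⟩,
    Fin.cases hvu.ne' hxv, fun _ => hvu, ?_, fun _ => hlast hm, ?_⟩
  · rintro (_ | j) h
    exacts [hstart hm, hchain j (by omega)]
  · rintro (_ | j) h
    exacts [hu, hinner j (by omega)]

theorem exists_pendentPath_of_forall_mem_branch [Finite α] {v u : α} (hG : G.IsAcyclic)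
    (hvu : G.Adj v u) (hdeg : ∀ w ∈ G.branch v u, (G.neighborSet w).ncard ≤ 2) :
    ∃ (m : ℕ) (x : Fin m → α), PendentPath G v m x ∧ ∃ h : 0 < m, x ⟨0, h⟩ = u := by
  have hpos : 0 < (G.neighborSet u).ncard :=
    (Set.ncard_pos (Set.toFinite _)).mpr ⟨v, hvu.symm⟩
  obtain hu | hu : (G.neighborSet u).ncard = 1 ∨ (G.neighborSet u).ncard = 2 := by
    have := hdeg u (self_mem_branch hvu.ne'); omega
  · exact ⟨1, _, .single hvu hu, one_pos, rfl⟩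
  obtain ⟨u', hu', hu'v⟩ := Set.exists_ne_of_one_lt_ncard (s := G.neighborSet u) (by omega) v
  have hsub := hG.branch_subset_branch hvu hu' hu'v
  have hlt : (G.branch u u').ncard < (G.branch v u).ncard :=
    Set.ncard_lt_ncard ((Set.ssubset_iff_of_subset hsub).mpr
      ⟨u, self_mem_branch hvu.ne', fun h => ne_of_mem_branch h rfl⟩)
  obtain ⟨m, x, hx, hm, rfl⟩ :=
    exists_pendentPath_of_forall_mem_branch hG hu' fun w hw => hdeg w (hsub hw)
  exact ⟨m + 1, _, hx.cons hm hvu hu fun i => ne_of_mem_branch (hsub (hx.mem_branch hm i)),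
    Nat.succ_pos m, rfl⟩
termination_by (G.branch v u).ncard

end PendentPath

open SimpleGraph in
theorem pgsCenter_of_forall_dist_le {α : Type*} [Finite α] {G : SimpleGraph α} {a b : α}
    (hG : G.IsTree) (hab : a ≠ b) (ha : 3 ≤ (G.neighborSet a).ncard)
    (hb : 3 ≤ (G.neighborSet b).ncard)
    (hfar : ∀ w, 3 ≤ (G.neighborSet w).ncard → G.dist w b ≤ G.dist a b) : PGSCenter G a := by
  obtain ⟨ub, hub, hb_mem⟩ := hG.connected.preconnected.exists_adj_mem_branch hab.symm
  refine ⟨ha, ub, ⟨hub, ?_⟩, ?_⟩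
  · rintro ⟨m, x, hx, hm, rfl⟩
    obtain ⟨i, rfl⟩ := hx.mem_range_of_mem_branch ⟨0, hm⟩ hb_mem
    exact absurd (hx.ncard_neighborSet_le i) (by omega)
  · rintro y ⟨hy, hy_not⟩
    by_contra hne
    refine hy_not (exists_pendentPath_of_forall_mem_branch hG.isAcyclic hy fun w hw => ?_)
    have hbw : b ∉ G.branch a w := fun hbw =>
      (hG.isAcyclic.disjoint_branch hy hub hne).ne_of_mem (mem_branch_trans hw hbw) hb_mem rfl
    by_contra! hw3
    exact absurd (hfar w hw3)
      (not_le.mpr (hG.connected.dist_lt_of_notMem_branch (ne_of_mem_branch hw) hbw))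

theorem two_pendent_generalized_stars (T : SimpleGraph V) (hT : T.IsTree)
    (h : ∃ a b : V, a ≠ b ∧ 3 ≤ (T.neighborSet a).ncard ∧ 3 ≤ (T.neighborSet b).ncard) :
    ∃ v w : V, v ≠ w ∧ PGSCenter T v ∧ PGSCenter T w := by
  obtain ⟨a₀, b₀, hne₀, ha₀, hb₀⟩ := h
  let high : Set V := {w | 3 ≤ (T.neighborSet w).ncard}
  obtain ⟨⟨a, b⟩, ⟨ha, hb⟩, hmax⟩ := (high ×ˢ high).exists_max_image
    (fun p => T.dist p.1 p.2) (Set.toFinite _) ⟨(a₀, b₀), ha₀, hb₀⟩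
  have hab : a ≠ b := by
    rintro rfl
    have hle : T.dist a₀ b₀ ≤ T.dist a a := hmax (a₀, b₀) ⟨ha₀, hb₀⟩
    have := hT.connected.pos_dist_of_ne hne₀
    rw [SimpleGraph.dist_self] at hle
    omega
  refine ⟨a, b, hab, ?_, ?_⟩
  · exact pgsCenter_of_forall_dist_le hT hab ha hb fun w hw => hmax (w, b) ⟨hw, hb⟩
  · refine pgsCenter_of_forall_dist_le hT hab.symm hb ha fun w hw => ?_
    rw [SimpleGraph.dist_comm, SimpleGraph.dist_comm (u := b)]
    exact hmax (a, w) ⟨ha, hw⟩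
end

section
/- The cycle C_n is well-failed if and only if n ≤ 5 or n = 7. -/
variable {V : Type*} [Fintype V] [DecidableEq V]

/-!
On a cycle every vertex has two neighbours, so a vertex outside a fort has both or none of them in
it; and two adjacent vertices outside a fort force, step by step around the cycle, every vertex
outside. Hence the forts of `C_n` are exactly the complements of independent sets, the minimal
forts are the complements of maximal independent sets, and `C_n` is well-failed iff all its
maximal independent sets have the same size. For `n ≤ 5` and `n = 7` this is a finite check;
otherwise the alternating set `{0, 2, 4, 6, …}` and the set obtained from it by replacing `2, 4`
with `3` are maximal independent sets of different sizes.
-/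

open SimpleGraph

variable {V : Type*} {G : SimpleGraph V}

theorem maximal_isIndepSet_iff_forall_exists_adj {s : Set V} :
    Maximal G.IsIndepSet s ↔ G.IsIndepSet s ∧ ∀ v ∉ s, ∃ u ∈ s, G.Adj v u := by
  rw [Set.maximal_iff_forall_insert fun _ _ ht hst ↦ ht.mono hst]
  refine and_congr_right fun hs ↦ forall₂_congr fun v hv ↦ ?_
  rw [IsIndepSet, Set.pairwise_insert]
  simp only [hs, true_and, not_forall, not_and_or, not_not, G.adj_comm v, or_self, exists_prop]
  exact ⟨fun ⟨u, hu, _, h⟩ ↦ ⟨u, hu, h⟩, fun ⟨u, hu, h⟩ ↦ ⟨u, hu, h.ne', h⟩⟩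

def WellCovered (G : SimpleGraph V) : Prop :=
  ∀ s t : Set V, Maximal G.IsIndepSet s → Maximal G.IsIndepSet t → s.ncard = t.ncard

theorem wellCovered_of_forall_card_eq [Fintype V] [DecidableRel G.Adj] (k : ℕ)
    (h : ∀ s : Finset V, G.IsIndepSet ↑s → (∀ v ∉ s, ∃ u ∈ s, G.Adj v u) → s.card = k) :
    WellCovered G := by
  classical
  have hk : ∀ s : Set V, Maximal G.IsIndepSet s → s.ncard = k := fun s hs ↦ by
    rw [maximal_isIndepSet_iff_forall_exists_adj] at hs
    rw [Set.ncard_eq_toFinset_card']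
    exact h _ (by simpa using hs.1) (by simpa using hs.2)
  exact fun s t hs ht ↦ (hk s hs).trans (hk t ht).symm

section Fort

variable {W : Set V}

def WellFailed (G : SimpleGraph V) : Prop :=
  ∀ W W' : Set V, MinimalFort G W → MinimalFort G W' → W.ncard = W'.ncard

theorem Fort.notMem_of_adj_of_notMem [G.LocallyFinite] (hW : Fort G W) {x y z : V}
    (hdeg : G.degree x ≤ 2) (hx : x ∉ W) (hxy : G.Adj x y) (hxz : G.Adj x z) (hy : y ∉ W) :
    z ∉ W := by
  classical
  intro hz
  have hyz : y ≠ z := by rintro rfl; exact hy hz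
  have hnbrs : G.neighborFinset x = {y, z} :=
    (Finset.eq_of_subset_of_card_le (by simp [Finset.insert_subset_iff, hxy, hxz])
      (by rw [Finset.card_pair hyz]; exact hdeg)).symm
  refine hW.2 x hx ⟨z, ⟨hz, hxz⟩, fun w ⟨hw, hxw⟩ ↦ ?_⟩
  rw [← mem_neighborFinset, hnbrs, Finset.mem_insert, Finset.mem_singleton] at hxw
  exact hxw.resolve_left (by rintro rfl; exact hy hw)

theorem Fort.isIndepSet_compl [G.LocallyFinite] (hG : ∀ v, G.degree v ≤ 2)
    (hconn : G.Connected) (hW : Fort G W) : G.IsIndepSet Wᶜ := by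
  intro x hx y hy _ hxy
  set A := {v | v ∉ W ∧ ∃ u ∉ W, G.Adj v u}
  have hclosed : ∀ v w, G.Adj v w → v ∈ A → w ∈ A := by
    rintro v w hvw ⟨hv, u, hu, hvu⟩
    by_cases hwu : w = u
    · exact ⟨hwu ▸ hu, v, hv, hvw.symm⟩
    · exact ⟨hW.notMem_of_adj_of_notMem (hG v) hv hvu hvw hu, v, hv, hvw.symm⟩
  have hall : ∀ v, v ∈ A := fun v ↦ by
    induction (reachable_iff_reflTransGen x v).1 (hconn.preconnected x v) with
    | refl => exact ⟨hx, y, hy, hxy⟩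
    | tail _ hadj ih => exact hclosed _ _ hadj ih
  obtain ⟨w, hw⟩ := hW.1
  exact (hall w).1 hw

theorem fort_of_isIndepSet_compl [Nonempty V] [G.LocallyFinite] (hG : ∀ v, 2 ≤ G.degree v)
    (hW : G.IsIndepSet Wᶜ) : Fort G W := by
  have hnbrs : ∀ v, ∃ a b, a ≠ b ∧ G.Adj v a ∧ G.Adj v b := fun v ↦ by
    obtain ⟨a, ha, b, hb, hab⟩ := Finset.one_lt_card.1 (hG v)
    exact ⟨a, b, hab, (mem_neighborFinset ..).1 ha, (mem_neighborFinset ..).1 hb⟩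
  have hmem : ∀ v ∉ W, ∀ a, G.Adj v a → a ∈ W := fun v hv a hva ↦ by
    by_contra ha
    exact hW hv ha hva.ne hva
  refine ⟨?_, fun v hv ⟨w, _, huniq⟩ ↦ ?_⟩
  · obtain ⟨v⟩ := ‹Nonempty V›
    by_cases hv : v ∈ W
    · exact ⟨v, hv⟩
    · obtain ⟨a, -, -, hva, -⟩ := hnbrs v
      exact ⟨a, hmem v hv a hva⟩
  · obtain ⟨a, b, hab, hva, hvb⟩ := hnbrs v
    exact hab ((huniq a ⟨hmem v hv a hva, hva⟩).trans (huniq b ⟨hmem v hv b hvb, hvb⟩).symm)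

theorem fort_iff_isIndepSet_compl [G.LocallyFinite] (hG : G.IsRegularOfDegree 2)
    (hconn : G.Connected) : Fort G W ↔ G.IsIndepSet Wᶜ :=
  haveI := hconn.nonempty
  ⟨(·.isIndepSet_compl (fun v ↦ (hG v).le) hconn), fort_of_isIndepSet_compl fun v ↦ (hG v).ge⟩

theorem minimalFort_iff_maximal_isIndepSet_compl [G.LocallyFinite] (hG : G.IsRegularOfDegree 2)
    (hconn : G.Connected) : MinimalFort G W ↔ Maximal G.IsIndepSet Wᶜ := by
  simp only [MinimalFort, maximal_subset_iff, fort_iff_isIndepSet_compl hG hconn]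
  refine and_congr_right fun _ ↦ ⟨fun h t ht hWt ↦ ?_, fun h W' hW' hW'W ↦ ?_⟩
  · rw [← compl_compl t, h tᶜ (by rwa [compl_compl]) (Set.compl_subset_comm.1 hWt)]
  · exact compl_injective (h hW' (Set.compl_subset_compl.2 hW'W)).symm

theorem wellFailed_iff_wellCovered [Finite V] [G.LocallyFinite] (hG : G.IsRegularOfDegree 2)
    (hconn : G.Connected) : WellFailed G ↔ WellCovered G := by
  have hcompl := fun s : Set V ↦ Set.ncard_add_ncard_compl s
  refine ⟨fun h s t hs ht ↦ ?_, fun h W W' hW hW' ↦ ?_⟩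
  · have := h sᶜ tᶜ
      ((minimalFort_iff_maximal_isIndepSet_compl hG hconn).2 (by rwa [compl_compl]))
      ((minimalFort_iff_maximal_isIndepSet_compl hG hconn).2 (by rwa [compl_compl]))
    linarith [hcompl s, hcompl t]
  · have := h _ _ ((minimalFort_iff_maximal_isIndepSet_compl hG hconn).1 hW)
      ((minimalFort_iff_maximal_isIndepSet_compl hG hconn).1 hW')
    linarith [hcompl W, hcompl W']

end Fort

theorem cycleGraph_isRegularOfDegree_two (n : ℕ) : (cycleGraph (n + 3)).IsRegularOfDegree 2 :=
  fun _ ↦ cycleGraph_degree_three_le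

theorem cycleGraph_adj_iff_val {n : ℕ} (hn : 2 ≤ n) {u v : Fin n} :
    (cycleGraph n).Adj u v ↔ u.val + 1 = v.val ∨ v.val + 1 = u.val ∨
      (u.val + 1 = n ∧ v.val = 0) ∨ (v.val + 1 = n ∧ u.val = 0) := by
  rw [cycleGraph_adj']
  have := u.isLt; have := v.isLt
  rcases le_or_gt v u with h | h
  · have h1 := Fin.coe_sub_iff_le.2 h
    rcases h.lt_or_eq with h' | rfl
    · have h2 := Fin.coe_sub_iff_lt.2 h'
      rw [Fin.lt_def] at h'
      omega
    · omega
  · have h1 := Fin.coe_sub_iff_lt.2 h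
    have h2 := Fin.coe_sub_iff_le.2 h.le
    rw [Fin.lt_def] at h
    omega

def alternatingVertices (n : ℕ) : Finset (Fin n) := {v | v.val % 2 = 0 ∧ v.val + 1 < n}

theorem mem_alternatingVertices {n : ℕ} {v : Fin n} :
    v ∈ alternatingVertices n ↔ v.val % 2 = 0 ∧ v.val + 1 < n := by
  simp [alternatingVertices]

theorem maximal_isIndepSet_alternatingVertices {n : ℕ} (hn : 2 ≤ n) :
    Maximal (cycleGraph n).IsIndepSet (alternatingVertices n : Set (Fin n)) := by
  rw [maximal_isIndepSet_iff_forall_exists_adj]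
  refine ⟨fun u hu v hv _ huv ↦ ?_, fun v hv ↦ ?_⟩
  · rw [Finset.mem_coe, mem_alternatingVertices] at hu hv
    rw [cycleGraph_adj_iff_val hn] at huv
    omega
  · rw [Finset.mem_coe, mem_alternatingVertices] at hv
    have hwit : ∀ k (hk : k < n), k % 2 = 0 ∧ k + 1 < n →
        k + 1 = v.val ∨ (v.val + 1 = n ∧ k = 0) →
        ∃ u ∈ (alternatingVertices n : Set (Fin n)), (cycleGraph n).Adj v u :=
      fun k hk h1 h2 ↦ ⟨⟨k, hk⟩, mem_alternatingVertices.2 h1,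
        (cycleGraph_adj_iff_val hn).2 (by dsimp only; omega)⟩
    by_cases hodd : v.val % 2 = 1
    · exact hwit (v.val - 1) (by omega) (by omega) (by omega)
    · exact hwit 0 (by omega) (by omega) (by omega)

/-- Replacing `2, 4` by `3` in `alternatingVertices n` loses a vertex and keeps the set maximal
independent as long as `5` is still dominated, by `6`; for `n = 7` the vertex `6` is missing. -/
theorem exists_maximal_isIndepSet_card_lt {n : ℕ} (hn : n = 6 ∨ 8 ≤ n) :
    ∃ s t : Finset (Fin n), Maximal (cycleGraph n).IsIndepSet ↑s ∧
      Maximal (cycleGraph n).IsIndepSet ↑t ∧ t.card < s.card := by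
  have h2 : 2 ≤ n := by omega
  set s := alternatingVertices n
  set a : Fin n := ⟨2, by omega⟩
  set b : Fin n := ⟨3, by omega⟩
  set c : Fin n := ⟨4, by omega⟩
  set t := insert b ((s.erase a).erase c)
  have hmem : ∀ v : Fin n, v ∈ t ↔
      v.val = 3 ∨ (v.val ≠ 2 ∧ v.val ≠ 4 ∧ v.val % 2 = 0 ∧ v.val + 1 < n) := fun v ↦ by
    simp only [t, s, a, b, c, Finset.mem_insert, Finset.mem_erase, mem_alternatingVertices, ne_eq,
      Fin.ext_iff]
    tauto
  refine ⟨s, t, maximal_isIndepSet_alternatingVertices h2, ?_, ?_⟩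
  · rw [maximal_isIndepSet_iff_forall_exists_adj]
    refine ⟨fun u hu v hv _ huv ↦ ?_, fun v hv ↦ ?_⟩
    · rw [Finset.mem_coe, hmem] at hu hv
      rw [cycleGraph_adj_iff_val h2] at huv
      omega
    · rw [Finset.mem_coe, hmem] at hv
      have hwit : ∀ k (hk : k < n), (k = 3 ∨ (k ≠ 2 ∧ k ≠ 4 ∧ k % 2 = 0 ∧ k + 1 < n)) →
          v.val + 1 = k ∨ k + 1 = v.val ∨ (v.val + 1 = n ∧ k = 0) →
          ∃ u ∈ (t : Set (Fin n)), (cycleGraph n).Adj v u :=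
        fun k hk h1 h2' ↦ ⟨⟨k, hk⟩, (hmem _).2 h1,
          (cycleGraph_adj_iff_val h2).2 (by dsimp only; omega)⟩
      rcases (by omega : v.val = 2 ∨ v.val = 4 ∨ v.val = 1 ∨ v.val + 1 = n ∨
          (v.val = 5 ∧ 8 ≤ n) ∨ (7 ≤ v.val ∧ v.val % 2 = 1)) with h | h | h | h | h | h
      · exact hwit 3 (by omega) (by omega) (by omega)
      · exact hwit 3 (by omega) (by omega) (by omega)
      · exact hwit 0 (by omega) (by omega) (by omega)
      · exact hwit 0 (by omega) (by omega) (by omega)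
      · exact hwit 6 (by omega) (by omega) (by omega)
      · exact hwit (v.val - 1) (by omega) (by omega) (by omega)
  · have has : a ∈ s := mem_alternatingVertices.2 (show 2 % 2 = 0 ∧ 2 + 1 < n by omega)
    have hcs : c ∈ s.erase a := Finset.mem_erase.2
      ⟨by simp [a, c], mem_alternatingVertices.2 (show 4 % 2 = 0 ∧ 4 + 1 < n by omega)⟩
    have : t.card ≤ ((s.erase a).erase c).card + 1 := Finset.card_insert_le _ _
    have := Finset.card_erase_lt_of_mem hcs
    have := Finset.card_erase_lt_of_mem has
    omega

theorem cycleGraph_wellCovered_iff (n : ℕ) : WellCovered (cycleGraph n) ↔ n ≤ 5 ∨ n = 7 := by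
  refine ⟨fun h ↦ ?_, fun hn ↦ ?_⟩
  · by_contra! hn
    obtain ⟨s, t, hs, ht, hlt⟩ := exists_maximal_isIndepSet_card_lt (by omega : n = 6 ∨ 8 ≤ n)
    have := h _ _ hs ht
    rw [Set.ncard_coe_finset, Set.ncard_coe_finset] at this
    omega
  · obtain hn | rfl := hn
    · interval_cases n
      exacts [wellCovered_of_forall_card_eq 0 (by decide),
        wellCovered_of_forall_card_eq 1 (by decide), wellCovered_of_forall_card_eq 1 (by decide),
        wellCovered_of_forall_card_eq 1 (by decide), wellCovered_of_forall_card_eq 2 (by decide),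
        wellCovered_of_forall_card_eq 2 (by decide)]
    · set_option maxRecDepth 100000 in
      exact wellCovered_of_forall_card_eq 3 (by decide)

theorem cycle_wellFailed_iff (n : ℕ) (hn : 3 ≤ n) :
    (∀ W W' : Set (Fin n), MinimalFort (SimpleGraph.cycleGraph n) W →
      MinimalFort (SimpleGraph.cycleGraph n) W' → W.ncard = W'.ncard) ↔
    (n ≤ 5 ∨ n = 7) := by
  obtain ⟨m, rfl⟩ := Nat.exists_eq_add_of_le' hn
  exact (wellFailed_iff_wellCovered (cycleGraph_isRegularOfDegree_two m) cycleGraph_connected).trans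
    (cycleGraph_wellCovered_iff _)
end
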